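/- (Theorem 1, beam-splitter bullet.) Consider the parallel gate configuration with a single beam splitter on paths s ≠ t with constants R, T ≥ 0, R + T = 1 (B = {{s,t}}), all other paths free (F = {1,…,N}∖{s,t}), and no detectors or phase shifters (D = ∅, S = ∅). Let z ∈ ℂ^N be a unit vector and p ∈ [z]. Then the output measure pK belongs to [B_st(R,T) z]. -/

import Mathlib

open MeasureTheory
open scoped Classical

namespace SPI

/-! ## Ontology -/

/-- Ontic states: particle position `q`, field amplitudes `u`, field strengths `τ`. -/
abbrev Lam (N : ℕ) := Fin N × (Fin N → ℂ) × (Fin N → ℝ)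

/-- The constraint region of `Λ`: `|u j| ≤ 1` and `τ j ∈ [0,1]`. -/
def onticSet (N : ℕ) : Set (Lam N) :=
  {l | (∀ j, ‖l.2.1 j‖ ≤ 1) ∧ ∀ j, l.2.2 j ∈ Set.Icc (0 : ℝ) 1}

/-- Highest field strength `τ_max`. -/
noncomputable def tmax {N : ℕ} (τ : Fin N → ℝ) : ℝ := ⨆ j, τ j

/-- `Δ_τ u` : the amplitude vector with only maximal-strength entries retained. -/
noncomputable def deltaVec {N : ℕ} (τ : Fin N → ℝ) (u : Fin N → ℂ) : Fin N → ℂ :=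
  fun j => if τ j = tmax τ then u j else 0

/-- Proportionality `z ∼ z'` of complex vectors (a nonzero multiple). -/
def Propto {N : ℕ} (v w : Fin N → ℂ) : Prop := ∃ α : ℂ, α ≠ 0 ∧ v = α • w

/-- The subset `Λ_z^i` of the ontic state space. -/
def lamSet {N : ℕ} (z : Fin N → ℂ) (i : Fin N) : Set (Lam N) :=
  {l | l.1 = i ∧ l.2.2 i = tmax l.2.2 ∧ 0 < tmax l.2.2 ∧ Propto (deltaVec l.2.2 l.2.1) z}

/-- Membership in the auxiliary class `[z]_i`: a (Borel) probability measure giving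
full measure to `Λ_z^i`. -/
def memClassI {N : ℕ} (z : Fin N → ℂ) (i : Fin N) (μ : Measure (Lam N)) : Prop :=
  IsProbabilityMeasure μ ∧ μ (lamSet z i) = 1

/-- Membership in the class `[z]` (for a unit vector `z`): mixtures `∑ |z i|² • pᵢ`
with `pᵢ ∈ [z]_i` (terms with `z i = 0` omitted). -/
def memClass {N : ℕ} (z : Fin N → ℂ) (μ : Measure (Lam N)) : Prop :=
  ∃ f : Fin N → Measure (Lam N),
    (∀ i, z i ≠ 0 → memClassI z i (f i)) ∧
    μ = ∑ i, ENNReal.ofReal (‖z i‖ ^ 2) • f i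

/-- The `j`-th standard basis vector of `ℂ^N`. -/
def eVec {N : ℕ} (j : Fin N) : Fin N → ℂ := fun m => if m = j then 1 else 0

/-! ## Parallel gate configurations -/

/-- A parallel gate configuration: a partition of the paths `{1,…,N}` into free paths `Fr`,
detector paths `De`, phase-shifter paths `Sh` (phases `ω`), and a collection `Bs` of pairwise
disjoint pairs (beam splitters with constants `R`, `T`, `R + T = 1`). -/
structure Config (N : ℕ) where
  Fr : Finset (Fin N)
  De : Finset (Fin N)
  Sh : Finset (Fin N)
  ω : Fin N → ℝ
  Bs : Finset (Fin N × Fin N)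
  R : Fin N × Fin N → ℝ
  T : Fin N × Fin N → ℝ
  hR : ∀ p ∈ Bs, 0 ≤ R p
  hT : ∀ p ∈ Bs, 0 ≤ T p
  hRT : ∀ p ∈ Bs, R p + T p = 1
  hst : ∀ p ∈ Bs, p.1 ≠ p.2
  hBB : ∀ p ∈ Bs, ∀ q ∈ Bs, p ≠ q → p.1 ≠ q.1 ∧ p.1 ≠ q.2 ∧ p.2 ≠ q.1 ∧ p.2 ≠ q.2
  hFD : Disjoint Fr De
  hFS : Disjoint Fr Sh
  hDS : Disjoint De Sh
  hBdisj : ∀ p ∈ Bs, p.1 ∉ Fr ∧ p.2 ∉ Fr ∧ p.1 ∉ De ∧ p.2 ∉ De ∧ p.1 ∉ Sh ∧ p.2 ∉ Sh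
  hcover : ∀ m : Fin N, m ∈ Fr ∨ m ∈ De ∨ m ∈ Sh ∨ ∃ p ∈ Bs, m = p.1 ∨ m = p.2

/-- Path `m` enters some beam splitter of the configuration. -/
def inB {N : ℕ} (c : Config N) (m : Fin N) : Prop := ∃ p ∈ c.Bs, m = p.1 ∨ m = p.2

/-- The new field strengths `τ'` produced by the parallel gates. -/
noncomputable def newTau {N : ℕ} (c : Config N) (q : Fin N) (τ : Fin N → ℝ) : Fin N → ℝ :=
  fun m =>
    if m ∈ c.De then (if q = m then 1 else 0)
    else if hm : inB c m then max (τ hm.choose.1) (τ hm.choose.2) / 2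
    else τ m / 2

/-- The new field amplitudes `u'` produced by the parallel gates. -/
noncomputable def newAmp {N : ℕ} (c : Config N) (q : Fin N) (u : Fin N → ℂ) (τ : Fin N → ℝ) :
    Fin N → ℂ :=
  fun m =>
    if m ∈ c.De then (if q = m then 1 else u m)
    else if m ∈ c.Sh then Complex.exp (Complex.I * (c.ω m : ℂ)) * u m
    else if hm : inB c m then
      (let p := hm.choose
       let ts := max (τ p.1) (τ p.2)
       let us : ℂ := if τ p.1 = ts then u p.1 else 0
       let ut : ℂ := if τ p.2 = ts then u p.2 else 0
       if m = p.1 then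
         Complex.I * (Real.sqrt (c.R p) : ℂ) * us + (Real.sqrt (c.T p) : ℂ) * ut
       else
         (Real.sqrt (c.T p) : ℂ) * us + Complex.I * (Real.sqrt (c.R p) : ℂ) * ut)
    else u m

/-- One step of the dynamics: the Markov kernel `K` of the parallel gate configuration,
as a measure-valued map on ontic states. -/
noncomputable def step {N : ℕ} (c : Config N) (l : Lam N) : Measure (Lam N) :=
  let q := l.1
  let u' := newAmp c q l.2.1 l.2.2
  let τ' := newTau c q l.2.2
  if hq : inB c q then
    (let p := hq.choose
     let a := ‖u' p.1‖ ^ 2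
     let b := ‖u' p.2‖ ^ 2
     if a + b = 0 then Measure.dirac (q, u', τ')
     else ENNReal.ofReal (a / (a + b)) • Measure.dirac (p.1, u', τ')
        + ENNReal.ofReal (b / (a + b)) • Measure.dirac (p.2, u', τ'))
  else Measure.dirac (q, u', τ')

/-- The output measure `pK` of the kernel applied to an input measure `p`. -/
noncomputable def out {N : ℕ} (c : Config N) (μ : Measure (Lam N)) : Measure (Lam N) :=
  μ.bind (step c)

/-! ## Interferometric matrices -/

/-- The projector `P_j` onto component `j`. -/
def Pmat {N : ℕ} (j : Fin N) : Matrix (Fin N) (Fin N) ℂ :=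
  Matrix.diagonal (fun a => if a = j then 1 else 0)

/-- The phase-shifter matrix `S_k(ω)`. -/
noncomputable def Smat {N : ℕ} (k : Fin N) (ω : ℝ) : Matrix (Fin N) (Fin N) ℂ :=
  Matrix.diagonal (fun a => if a = k then Complex.exp (Complex.I * (ω : ℂ)) else 1)

/-- The beam-splitter matrix `B_st(R,T)`: identity outside `{s,t}` and
`[[i√R, √T],[√T, i√R]]` on components `{s,t}`. -/
noncomputable def Bmat {N : ℕ} (s t : Fin N) (R T : ℝ) : Matrix (Fin N) (Fin N) ℂ :=
  Matrix.of fun a b =>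
    if a = s then
      (if b = s then Complex.I * (Real.sqrt R : ℂ) else if b = t then (Real.sqrt T : ℂ) else 0)
    else if a = t then
      (if b = s then (Real.sqrt T : ℂ) else if b = t then Complex.I * (Real.sqrt R : ℂ) else 0)
    else if a = b then 1 else 0

/-- The matrix `Δ_τ` selecting the components of maximal strength. -/
noncomputable def Dmat {N : ℕ} (τ : Fin N → ℝ) : Matrix (Fin N) (Fin N) ℂ :=
  Matrix.diagonal (fun j => if τ j = tmax τ then 1 else 0)

/-- The matrix `Δ^(st)_τ` with `δ_{τ_s,max(τ_s,τ_t)}`, `δ_{τ_t,max(τ_s,τ_t)}` at `s`, `t`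
and `1` elsewhere on the diagonal. -/
noncomputable def DmatST {N : ℕ} (τ : Fin N → ℝ) (s t : Fin N) : Matrix (Fin N) (Fin N) ℂ :=
  Matrix.diagonal (fun m =>
    if m = s then (if τ s = max (τ s) (τ t) then 1 else 0)
    else if m = t then (if τ t = max (τ s) (τ t) then 1 else 0)
    else 1)

/-! ## Commutation lemmas -/

lemma commute_diagonal {N : ℕ} (d e : Fin N → ℂ) :
    Commute (Matrix.diagonal d) (Matrix.diagonal e) := by
  have h : (fun i => d i * e i) = fun i => e i * d i := funext fun i => mul_comm _ _
  show Matrix.diagonal d * Matrix.diagonal e = Matrix.diagonal e * Matrix.diagonal d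
  rw [Matrix.diagonal_mul_diagonal, Matrix.diagonal_mul_diagonal, h]

lemma oneSubP_diagonal {N : ℕ} (j : Fin N) :
    (1 : Matrix (Fin N) (Fin N) ℂ) - Pmat j
      = Matrix.diagonal (fun a => 1 - if a = j then 1 else 0) := by
  rw [Pmat, ← Matrix.diagonal_one, Matrix.diagonal_sub]

lemma commute_oneSubP {N : ℕ} (j j' : Fin N) :
    Commute ((1 : Matrix (Fin N) (Fin N) ℂ) - Pmat j) (1 - Pmat j') := by
  rw [oneSubP_diagonal, oneSubP_diagonal]; exact commute_diagonal _ _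

/-- A matrix which differs from the identity only inside the block `{s,t} × {s,t}`. -/
def IsBlock {N : ℕ} (s t : Fin N) (M : Matrix (Fin N) (Fin N) ℂ) : Prop :=
  ∀ a b, ¬((a = s ∨ a = t) ∧ (b = s ∨ b = t)) →
    M a b = (1 : Matrix (Fin N) (Fin N) ℂ) a b

lemma commute_of_isBlock {N : ℕ} {s t s' t' : Fin N} {M M' : Matrix (Fin N) (Fin N) ℂ}
    (hM : IsBlock s t M) (hM' : IsBlock s' t' M')
    (h1 : s ≠ s') (h2 : s ≠ t') (h3 : t ≠ s') (h4 : t ≠ t') : Commute M M' := by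
  have hrow : ∀ a b : Fin N, a ≠ s → a ≠ t → (M - 1) a b = 0 := by
    intro a b ha hb
    have h := hM a b (by tauto)
    simp [Matrix.sub_apply, h]
  have hcol : ∀ a b : Fin N, b ≠ s → b ≠ t → (M - 1) a b = 0 := by
    intro a b hb1 hb2
    have h := hM a b (by tauto)
    simp [Matrix.sub_apply, h]
  have hrow' : ∀ a b : Fin N, a ≠ s' → a ≠ t' → (M' - 1) a b = 0 := by
    intro a b ha hb
    have h := hM' a b (by tauto)
    simp [Matrix.sub_apply, h]
  have hcol' : ∀ a b : Fin N, b ≠ s' → b ≠ t' → (M' - 1) a b = 0 := by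
    intro a b hb1 hb2
    have h := hM' a b (by tauto)
    simp [Matrix.sub_apply, h]
  have hEE' : (M - 1) * (M' - 1) = 0 := by
    ext a b
    rw [Matrix.mul_apply, Matrix.zero_apply]
    apply Finset.sum_eq_zero
    intro k _
    by_cases hk : k = s ∨ k = t
    · have : (M' - 1) k b = 0 := by
        rcases hk with h | h
        · subst h; exact hrow' _ _ h1 h2
        · subst h; exact hrow' _ _ h3 h4
      rw [this, mul_zero]
    · push_neg at hk
      rw [hcol a k hk.1 hk.2, zero_mul]
  have hE'E : (M' - 1) * (M - 1) = 0 := by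
    ext a b
    rw [Matrix.mul_apply, Matrix.zero_apply]
    apply Finset.sum_eq_zero
    intro k _
    by_cases hk : k = s' ∨ k = t'
    · have : (M - 1) k b = 0 := by
        rcases hk with h | h
        · subst h; exact hrow _ _ (Ne.symm h1) (Ne.symm h3)
        · subst h; exact hrow _ _ (Ne.symm h2) (Ne.symm h4)
      rw [this, mul_zero]
    · push_neg at hk
      rw [hcol' a k hk.1 hk.2, zero_mul]
  have expand : ∀ A B : Matrix (Fin N) (Fin N) ℂ,
      A * B = (A - 1) * (B - 1) + A + B - 1 := by
    intro A B; noncomm_ring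
  unfold Commute SemiconjBy
  rw [expand M M', expand M' M, hEE', hE'E]
  abel

lemma isBlock_Bmat {N : ℕ} (s t : Fin N) (R T : ℝ) : IsBlock s t (Bmat s t R T) := by
  intro a b hab
  by_cases has : a = s ∨ a = t
  · have hbs : ¬(b = s ∨ b = t) := fun h => hab ⟨has, h⟩
    push_neg at hbs
    have hb : a ≠ b := by
      rcases has with h | h <;> subst h
      · exact fun hc => hbs.1 hc.symm
      · exact fun hc => hbs.2 hc.symm
    rw [Matrix.one_apply_ne hb]
    rcases has with h | h <;> subst h <;> simp [Bmat, hbs.1, hbs.2]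
  · push_neg at has
    simp [Bmat, Matrix.one_apply, has.1, has.2]

lemma isBlock_one_sub_Pmat {N : ℕ} (j : Fin N) :
    IsBlock j j ((1 : Matrix (Fin N) (Fin N) ℂ) - Pmat j) := by
  intro a b hab
  have haj : a ≠ j ∨ b ≠ j := by tauto
  rw [oneSubP_diagonal]
  by_cases h : a = b
  · subst h
    have haj' : a ≠ j := by tauto
    simp [Matrix.diagonal_apply_eq, Matrix.one_apply_eq, haj']
  · simp [Matrix.diagonal_apply_ne _ h, Matrix.one_apply_ne h]

lemma isBlock_Smat {N : ℕ} (k : Fin N) (ω : ℝ) : IsBlock k k (Smat k ω) := by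
  intro a b hab
  have haj : a ≠ k ∨ b ≠ k := by tauto
  by_cases h : a = b
  · subst h
    have haj' : a ≠ k := by tauto
    simp [Smat, Matrix.diagonal_apply_eq, Matrix.one_apply_eq, haj']
  · simp [Smat, Matrix.diagonal_apply_ne _ h, Matrix.one_apply_ne h]

lemma isBlock_mul_diag {N : ℕ} (s t : Fin N) (M : Matrix (Fin N) (Fin N) ℂ)
    (hM : IsBlock s t M) (d : Fin N → ℂ) (hd : ∀ m, m ≠ s → m ≠ t → d m = 1) :
    IsBlock s t (M * Matrix.diagonal d) := by
  intro a b hab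
  rw [Matrix.mul_diagonal, hM a b hab]
  by_cases h : a = b
  · subst h
    have h1 : a ≠ s := fun hc => hab ⟨Or.inl hc, Or.inl hc⟩
    have h2 : a ≠ t := fun hc => hab ⟨Or.inr hc, Or.inr hc⟩
    rw [Matrix.one_apply_eq, hd a h1 h2, mul_one]
  · rw [Matrix.one_apply_ne h, zero_mul]

lemma isBlock_BmatD {N : ℕ} (s t : Fin N) (R T : ℝ) (τ : Fin N → ℝ) :
    IsBlock s t (Bmat s t R T * DmatST τ s t) := by
  unfold DmatST
  refine isBlock_mul_diag s t _ (isBlock_Bmat s t R T) _ ?_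
  intro m h1 h2
  simp [h1, h2]

/-! ## The matrix `W` of the configuration -/

noncomputable def Dprod {N : ℕ} (c : Config N) : Matrix (Fin N) (Fin N) ℂ :=
  c.De.noncommProd (fun j => 1 - Pmat j) (fun _ _ _ _ _ => commute_oneSubP _ _)

noncomputable def Sprod {N : ℕ} (c : Config N) : Matrix (Fin N) (Fin N) ℂ :=
  c.Sh.noncommProd (fun k => Smat k (c.ω k)) (fun _ _ _ _ _ => commute_diagonal _ _)

noncomputable def Bprod {N : ℕ} (c : Config N) : Matrix (Fin N) (Fin N) ℂ :=
  c.Bs.noncommProd (fun p => Bmat p.1 p.2 (c.R p) (c.T p))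
    (fun p hp q hq hpq => by
      obtain ⟨h1, h2, h3, h4⟩ := c.hBB p hp q hq hpq
      exact commute_of_isBlock (isBlock_Bmat _ _ _ _) (isBlock_Bmat _ _ _ _) h1 h2 h3 h4)

/-- The matrix `W = ∏_{j∈D}(1−P_j) ∏_{k∈S} S_k(ω_k) ∏_{{s,t}∈B} B_st(R_st,T_st)`. -/
noncomputable def Wmat {N : ℕ} (c : Config N) : Matrix (Fin N) (Fin N) ℂ :=
  Dprod c * Sprod c * Bprod c

/-- The vector `W z`. -/
noncomputable def Wvec {N : ℕ} (c : Config N) (z : Fin N → ℂ) : Fin N → ℂ :=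
  (Wmat c).mulVec z

/-- The product `∏_{{s,t}∈B} (B_st(R_st,T_st) Δ^(st)_τ)`. -/
noncomputable def BDprod {N : ℕ} (c : Config N) (τ : Fin N → ℝ) : Matrix (Fin N) (Fin N) ℂ :=
  c.Bs.noncommProd (fun p => Bmat p.1 p.2 (c.R p) (c.T p) * DmatST τ p.1 p.2)
    (fun p hp q hq hpq => by
      obtain ⟨h1, h2, h3, h4⟩ := c.hBB p hp q hq hpq
      exact commute_of_isBlock (isBlock_BmatD _ _ _ _ _) (isBlock_BmatD _ _ _ _ _) h1 h2 h3 h4)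

end SPI

/-!
The beam splitter updates the fields deterministically, and the identity
`Δ_{τ'} B Δ^{(st)}_τ u = B Δ_τ u` shows that a state of `Λ_z^i` is sent into `Λ_{Bz}^j` for
every position `j` it can move to. If the particle is on `s` or `t`, its new amplitudes there
are a common nonzero multiple of `(Bz)_s, (Bz)_t`, so it moves to `s` or `t` with probabilities
`|(Bz)_s|² / W` and `|(Bz)_t|² / W`, where `W = |z_s|² + |z_t|²` (`B` is unitary on the block).
These weights do not depend on the state, so on the support of `p` the kernel `K` is a
measurable kernel with constant branching weights. Hence `pK` is the sum of the push-forwards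
of the free components of `p` and of the two push-forwards of its `{s,t}`-part, which carry
masses `|(Bz)_m|²`.
-/

open scoped ENNReal Matrix

namespace MeasureTheory.Measure

variable {α β : Type*} [MeasurableSpace α] [MeasurableSpace β]

lemma finsetSum_bind {ι : Type*} (S : Finset ι) (μ : ι → Measure α) {κ : α → Measure β}
    (hκ : Measurable κ) : (∑ i ∈ S, μ i).bind κ = ∑ i ∈ S, (μ i).bind κ := by
  rw [← Finset.sum_coe_sort, ← sum_fintype, bind_sum _ _ hκ.aemeasurable, sum_fintype,
    Finset.sum_coe_sort S (fun i => (μ i).bind κ)]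

lemma measurable_smul_dirac_add_smul_dirac {g₁ g₂ : α → β} (hg₁ : Measurable g₁)
    (hg₂ : Measurable g₂) (a b : ℝ≥0∞) :
    Measurable fun x => a • dirac (g₁ x) + b • dirac (g₂ x) := by
  refine measurable_of_measurable_coe _ fun A hA => ?_
  simp only [add_apply, smul_apply, smul_eq_mul]
  exact (((measurable_coe hA).comp (measurable_dirac.comp hg₁)).const_mul a).add
    (((measurable_coe hA).comp (measurable_dirac.comp hg₂)).const_mul b)

lemma bind_smul_dirac_add_smul_dirac (μ : Measure α) {g₁ g₂ : α → β} (hg₁ : Measurable g₁)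
    (hg₂ : Measurable g₂) (a b : ℝ≥0∞) :
    μ.bind (fun x => a • dirac (g₁ x) + b • dirac (g₂ x)) = a • μ.map g₁ + b • μ.map g₂ := by
  ext A hA
  have hmeas : ∀ g : α → β, Measurable g → Measurable fun x => dirac (g x) A :=
    fun g hg => (measurable_coe hA).comp (measurable_dirac.comp hg)
  have hmap : ∀ g : α → β, Measurable g → ∫⁻ x, dirac (g x) A ∂μ = μ.map g A := fun g hg => by
    rw [← bind_dirac_eq_map _ hg]
    exact (bind_apply hA (measurable_dirac.comp hg).aemeasurable).symm
  rw [bind_apply hA (measurable_smul_dirac_add_smul_dirac hg₁ hg₂ a b).aemeasurable]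
  simp only [add_apply, smul_apply, smul_eq_mul]
  rw [lintegral_add_left ((hmeas g₁ hg₁).const_mul a), lintegral_const_mul _ (hmeas g₁ hg₁),
    lintegral_const_mul _ (hmeas g₂ hg₂), hmap g₁ hg₁, hmap g₂ hg₂]

end MeasureTheory.Measure

namespace SPI

section BeamSplitterMatrix

variable {N : ℕ} {s t : Fin N} (R T : ℝ)

lemma Bmat_mulVec_apply_left (hst : s ≠ t) (z : Fin N → ℂ) :
    (Bmat s t R T *ᵥ z) s = Complex.I * (Real.sqrt R : ℂ) * z s + (Real.sqrt T : ℂ) * z t := by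
  simp only [Matrix.mulVec, dotProduct, Bmat, Matrix.of_apply, if_true]
  rw [Fintype.sum_eq_add s t hst (fun x hx => by simp [hx.1, hx.2])]
  simp [hst.symm]

lemma Bmat_mulVec_apply_right (hst : s ≠ t) (z : Fin N → ℂ) :
    (Bmat s t R T *ᵥ z) t = (Real.sqrt T : ℂ) * z s + Complex.I * (Real.sqrt R : ℂ) * z t := by
  simp only [Matrix.mulVec, dotProduct, Bmat, Matrix.of_apply, if_true, if_neg hst.symm]
  rw [Fintype.sum_eq_add s t hst (fun x hx => by simp [hx.1, hx.2])]
  simp [hst.symm]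

lemma Bmat_mulVec_apply_of_ne {m : Fin N} (hs : m ≠ s) (ht : m ≠ t) (z : Fin N → ℂ) :
    (Bmat s t R T *ᵥ z) m = z m := by
  simp [Matrix.mulVec, dotProduct, Bmat, hs, ht]

lemma norm_sq_Bmat_mulVec_add (hst : s ≠ t) (hR : 0 ≤ R) (hT : 0 ≤ T) (hRT : R + T = 1)
    (z : Fin N → ℂ) :
    ‖(Bmat s t R T *ᵥ z) s‖ ^ 2 + ‖(Bmat s t R T *ᵥ z) t‖ ^ 2 = ‖z s‖ ^ 2 + ‖z t‖ ^ 2 := by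
  rw [Bmat_mulVec_apply_left R T hst, Bmat_mulVec_apply_right R T hst]
  have hR' := Real.sq_sqrt hR
  have hT' := Real.sq_sqrt hT
  simp only [Complex.sq_norm, Complex.normSq_apply, Complex.add_re, Complex.add_im,
    Complex.mul_re, Complex.mul_im, Complex.I_re, Complex.I_im, Complex.ofReal_re,
    Complex.ofReal_im]
  linear_combination ((z s).re ^ 2 + (z s).im ^ 2 + (z t).re ^ 2 + (z t).im ^ 2)
    * (hR' + hT' + hRT)

end BeamSplitterMatrix

lemma Propto.mulVec {N : ℕ} {v w : Fin N → ℂ} (h : Propto v w) (M : Matrix (Fin N) (Fin N) ℂ) :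
    Propto (M *ᵥ v) (M *ᵥ w) := by
  obtain ⟨α, hα, rfl⟩ := h
  exact ⟨α, hα, Matrix.mulVec_smul M α w⟩

lemma measurableSet_setOf_propto {N : ℕ} (z : Fin N → ℂ) : MeasurableSet {v | Propto v z} := by
  by_cases hz : z = 0
  · have : {v | Propto v z} = {0} := by
      ext v
      simpa [Propto, hz] using fun _ => ⟨1, one_ne_zero⟩
    rw [this]
    exact measurableSet_singleton 0
  · have : {v | Propto v z} = (Submodule.span ℂ {z} : Set (Fin N → ℂ)) \ {0} := by
      ext v
      simp only [Set.mem_ofPred_eq, Set.mem_sdiff, SetLike.mem_coe, Submodule.mem_span_singleton,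
        Set.mem_singleton_iff, Propto]
      constructor
      · rintro ⟨α, hα, rfl⟩
        exact ⟨⟨α, rfl⟩, smul_ne_zero hα hz⟩
      · rintro ⟨⟨α, rfl⟩, hv⟩
        exact ⟨α, left_ne_zero_of_smul hv, rfl⟩
    rw [this]
    exact (Submodule.closed_of_finiteDimensional _).measurableSet.diff (measurableSet_singleton 0)

lemma le_tmax {N : ℕ} (τ : Fin N → ℝ) (j : Fin N) : τ j ≤ tmax τ :=
  le_ciSup (Set.finite_range τ).bddAbove j

lemma measurable_tmax {N : ℕ} : Measurable fun τ : Fin N → ℝ => tmax τ :=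
  Measurable.iSup fun j => measurable_pi_apply j

lemma measurableSet_lamSet {N : ℕ} (z : Fin N → ℂ) (i : Fin N) : MeasurableSet (lamSet z i) := by
  have hτ : Measurable fun l : Lam N => l.2.2 := measurable_snd.snd
  have hmax : Measurable fun l : Lam N => tmax l.2.2 := measurable_tmax.comp hτ
  have hΔ : Measurable fun l : Lam N => deltaVec l.2.2 l.2.1 := by
    refine measurable_pi_lambda _ fun j => Measurable.ite ?_ ?_ measurable_const
    · exact measurableSet_eq_fun ((measurable_pi_apply j).comp hτ) hmax
    · exact (measurable_pi_apply j).comp measurable_snd.fst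
  exact (measurable_fst (measurableSet_singleton i)).inter
    ((measurableSet_eq_fun ((measurable_pi_apply i).comp hτ) hmax).inter
      ((measurableSet_lt measurable_const hmax).inter (hΔ (measurableSet_setOf_propto z))))

section BeamSplitterMap

variable {N : ℕ} (s t : Fin N) (R T : ℝ)

noncomputable def bsStrength (τ : Fin N → ℝ) : Fin N → ℝ :=
  fun m => if m = s ∨ m = t then max (τ s) (τ t) / 2 else τ m / 2

noncomputable def bsAmp (u : Fin N → ℂ) (τ : Fin N → ℝ) : Fin N → ℂ :=
  (Bmat s t R T * DmatST τ s t) *ᵥ u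

noncomputable def bsState (j : Fin N) (l : Lam N) : Lam N :=
  (j, bsAmp s t R T l.2.1 l.2.2, bsStrength s t l.2.2)

lemma measurable_bsAmp_bsStrength :
    Measurable fun l : Lam N => (bsAmp s t R T l.2.1 l.2.2, bsStrength s t l.2.2) := by
  have hτ : ∀ m, Measurable fun l : Lam N => l.2.2 m :=
    fun m => (measurable_pi_apply m).comp measurable_snd.snd
  have hsel : ∀ m, MeasurableSet {l : Lam N | l.2.2 m = max (l.2.2 s) (l.2.2 t)} :=
    fun m => measurableSet_eq_fun (hτ m) ((hτ s).max (hτ t))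
  refine Measurable.prodMk ?_ (measurable_pi_lambda _ fun m => ?_)
  · simp only [bsAmp, ← Matrix.mulVec_mulVec]
    refine (Continuous.matrix_mulVec continuous_const continuous_id).measurable.comp
      (measurable_pi_lambda _ fun m => ?_)
    show Measurable fun l : Lam N => (DmatST l.2.2 s t *ᵥ l.2.1) m
    simp only [DmatST, Matrix.mulVec_diagonal]
    refine Measurable.mul ?_ ((measurable_pi_apply m).comp measurable_snd.fst)
    exact .ite (.const _) (.ite (hsel s) measurable_const measurable_const)
      (.ite (.const _) (.ite (hsel t) measurable_const measurable_const) measurable_const)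
  · by_cases hm : m = s ∨ m = t
    · simp only [bsStrength, if_pos hm]
      exact ((hτ s).max (hτ t)).div_const 2
    · simp only [bsStrength, if_neg hm]
      exact (hτ m).div_const 2

lemma measurable_bsState (j : Fin N) : Measurable (bsState s t R T j) :=
  measurable_const.prodMk (measurable_bsAmp_bsStrength s t R T)

lemma tmax_bsStrength [Nonempty (Fin N)] (τ : Fin N → ℝ) :
    tmax (bsStrength s t τ) = tmax τ / 2 := by
  have hpair : max (τ s) (τ t) ≤ tmax τ := max_le (le_tmax τ s) (le_tmax τ t)
  have hbounds : ∀ m, τ m / 2 ≤ bsStrength s t τ m ∧ bsStrength s t τ m ≤ tmax τ / 2 := by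
    intro m
    unfold bsStrength
    split_ifs with hm
    · have : τ m ≤ max (τ s) (τ t) := by rcases hm with rfl | rfl <;> simp
      constructor <;> linarith
    · exact ⟨le_rfl, by linarith [le_tmax τ m]⟩
  obtain ⟨j, hj⟩ := exists_eq_ciSup_of_finite (f := τ)
  refine le_antisymm (ciSup_le fun m => (hbounds m).2) ?_
  calc tmax τ / 2 = τ j / 2 := by rw [hj]; rfl
    _ ≤ bsStrength s t τ j := (hbounds j).1
    _ ≤ tmax (bsStrength s t τ) := le_tmax _ j

lemma deltaVec_bsStrength_bsAmp (hst : s ≠ t) [Nonempty (Fin N)] (u : Fin N → ℂ)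
    (τ : Fin N → ℝ) :
    deltaVec (bsStrength s t τ) (bsAmp s t R T u τ) = Bmat s t R T *ᵥ deltaVec τ u := by
  funext m
  simp only [deltaVec, tmax_bsStrength, bsStrength, bsAmp, ← Matrix.mulVec_mulVec]
  by_cases hm : m = s ∨ m = t
  · simp only [if_pos hm, div_left_inj' (two_ne_zero' ℝ)]
    by_cases hM : max (τ s) (τ t) = tmax τ
    · have hsel : ∀ j, j = s ∨ j = t → (DmatST τ s t *ᵥ u) j = deltaVec τ u j := by
        rintro j (rfl | rfl) <;> simp [DmatST, Matrix.mulVec_diagonal, deltaVec, hM, hst.symm]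
      rcases hm with rfl | rfl
      · simp only [if_pos hM, Bmat_mulVec_apply_left R T hst, hsel _ (Or.inl rfl),
          hsel _ (Or.inr rfl), deltaVec]
      · simp only [if_pos hM, Bmat_mulVec_apply_right R T hst, hsel _ (Or.inl rfl),
          hsel _ (Or.inr rfl), deltaVec]
    · have hlt : ∀ j, j = s ∨ j = t → τ j ≠ tmax τ := by
        have := max_le (le_tmax τ s) (le_tmax τ t)
        rintro j (rfl | rfl) hj
        · exact hM (le_antisymm this (hj ▸ le_max_left _ _))
        · exact hM (le_antisymm this (hj ▸ le_max_right _ _))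
      rcases hm with rfl | rfl
      · simp [if_neg hM, Bmat_mulVec_apply_left R T hst, deltaVec, hlt _ (Or.inl rfl),
          hlt _ (Or.inr rfl)]
      · simp [if_neg hM, Bmat_mulVec_apply_right R T hst, deltaVec, hlt _ (Or.inl rfl),
          hlt _ (Or.inr rfl)]
  · simp only [if_neg hm, div_left_inj' (two_ne_zero' ℝ)]
    push Not at hm
    simp [Bmat_mulVec_apply_of_ne R T hm.1 hm.2, DmatST, Matrix.mulVec_diagonal, deltaVec, hm.1,
      hm.2]

lemma bsStrength_eq_tmax_of_ne {τ : Fin N → ℝ} {i : Fin N} (hi : τ i = tmax τ) (hs : i ≠ s)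
    (ht : i ≠ t) : bsStrength s t τ i = tmax (bsStrength s t τ) := by
  have : Nonempty (Fin N) := ⟨i⟩
  rw [tmax_bsStrength, bsStrength, if_neg (not_or.2 ⟨hs, ht⟩), hi]

lemma bsStrength_eq_tmax_of_mem {τ : Fin N → ℝ} {i j : Fin N} (hi : τ i = tmax τ)
    (hi' : i = s ∨ i = t) (hj : j = s ∨ j = t) :
    bsStrength s t τ j = tmax (bsStrength s t τ) := by
  have : Nonempty (Fin N) := ⟨i⟩
  have hM : max (τ s) (τ t) = tmax τ := by
    refine le_antisymm (max_le (le_tmax τ s) (le_tmax τ t)) ?_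
    rcases hi' with rfl | rfl
    exacts [hi ▸ le_max_left _ _, hi ▸ le_max_right _ _]
  rw [tmax_bsStrength, bsStrength, if_pos hj, hM]

lemma bsState_mem_lamSet (hst : s ≠ t) {z : Fin N → ℂ} {i j : Fin N} {l : Lam N}
    (hl : l ∈ lamSet z i) (hj : bsStrength s t l.2.2 j = tmax (bsStrength s t l.2.2)) :
    bsState s t R T j l ∈ lamSet (Bmat s t R T *ᵥ z) j := by
  obtain ⟨-, -, hpos, hprop⟩ := hl
  have : Nonempty (Fin N) := ⟨i⟩
  refine ⟨rfl, hj, ?_, ?_⟩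
  · change 0 < tmax (bsStrength s t l.2.2)
    rw [tmax_bsStrength]
    exact half_pos hpos
  · change Propto (deltaVec (bsStrength s t l.2.2) (bsAmp s t R T l.2.1 l.2.2)) _
    rw [deltaVec_bsStrength_bsAmp s t R T hst]
    exact hprop.mulVec _

lemma exists_bsAmp_eq_smul (hst : s ≠ t) {z : Fin N → ℂ} {i : Fin N} {l : Lam N}
    (hl : l ∈ lamSet z i) (hi : i = s ∨ i = t) :
    ∃ α : ℂ, α ≠ 0 ∧ ∀ j, j = s ∨ j = t →
      bsAmp s t R T l.2.1 l.2.2 j = α * (Bmat s t R T *ᵥ z) j := by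
  obtain ⟨-, hτi, -, α, hα, hΔ⟩ := hl
  have : Nonempty (Fin N) := ⟨i⟩
  refine ⟨α, hα, fun j hj => ?_⟩
  have h := congrFun (deltaVec_bsStrength_bsAmp s t R T hst l.2.1 l.2.2) j
  rwa [hΔ, Matrix.mulVec_smul, deltaVec, if_pos (bsStrength_eq_tmax_of_mem s t hτi hi hj)] at h

end BeamSplitterMap

section BeamSplitterKernel

variable {N : ℕ} (s t : Fin N) (R T : ℝ)

noncomputable def bsKernel (a b : ℝ≥0∞) (l : Lam N) : Measure (Lam N) :=
  if l.1 = s ∨ l.1 = t then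
    a • Measure.dirac (bsState s t R T s l) + b • Measure.dirac (bsState s t R T t l)
  else Measure.dirac (bsState s t R T l.1 l)

lemma measurable_bsKernel (a b : ℝ≥0∞) : Measurable (bsKernel s t R T a b) :=
  Measurable.ite (measurable_fst (.of_discrete : MeasurableSet {j | j = s ∨ j = t}))
    (Measure.measurable_smul_dirac_add_smul_dirac (measurable_bsState s t R T s)
      (measurable_bsState s t R T t) a b)
    (Measure.measurable_dirac.comp (measurable_fst.prodMk (measurable_bsAmp_bsStrength s t R T)))

lemma bind_bsKernel_of_ae_fst_eq (a b : ℝ≥0∞) {μ : Measure (Lam N)} {i : Fin N} (hs : i ≠ s)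
    (ht : i ≠ t) (hμ : ∀ᵐ l ∂μ, l.1 = i) :
    μ.bind (bsKernel s t R T a b) = μ.map (bsState s t R T i) := by
  rw [Measure.bind_congr_right (g := fun l => Measure.dirac (bsState s t R T i l)),
    Measure.bind_dirac_eq_map _ (measurable_bsState s t R T i)]
  filter_upwards [hμ] with l hl
  simp [bsKernel, hl, hs, ht]

lemma bind_bsKernel_of_ae_fst_mem (a b : ℝ≥0∞) {μ : Measure (Lam N)}
    (hμ : ∀ᵐ l ∂μ, l.1 = s ∨ l.1 = t) :
    μ.bind (bsKernel s t R T a b)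
      = a • μ.map (bsState s t R T s) + b • μ.map (bsState s t R T t) := by
  rw [Measure.bind_congr_right, Measure.bind_smul_dirac_add_smul_dirac μ
    (measurable_bsState s t R T s) (measurable_bsState s t R T t)]
  filter_upwards [hμ] with l hl
  simp [bsKernel, hl]

end BeamSplitterKernel

structure IsSingleBeamSplitter {N : ℕ} (c : Config N) (s t : Fin N) (R T : ℝ) : Prop where
  Bs_eq : c.Bs = {(s, t)}
  R_eq : c.R (s, t) = R
  T_eq : c.T (s, t) = T
  De_eq : c.De = ∅
  Sh_eq : c.Sh = ∅

namespace IsSingleBeamSplitter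

variable {N : ℕ} {c : Config N} {s t : Fin N} {R T : ℝ}

lemma inB_iff (hc : IsSingleBeamSplitter c s t R T) (m : Fin N) : inB c m ↔ m = s ∨ m = t := by
  simp [inB, hc.Bs_eq]

lemma choose_eq (hc : IsSingleBeamSplitter c s t R T) {m : Fin N} (hm : inB c m) :
    hm.choose = (s, t) := by
  simpa [hc.Bs_eq] using hm.choose_spec.1

lemma newTau_eq (hc : IsSingleBeamSplitter c s t R T) (q : Fin N) (τ : Fin N → ℝ) :
    newTau c q τ = bsStrength s t τ := by
  funext m
  by_cases hm : m = s ∨ m = t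
  · simp [newTau, bsStrength, hc.De_eq, (hc.inB_iff m).2 hm, hc.choose_eq, hm]
  · simp [newTau, bsStrength, hc.De_eq, mt (hc.inB_iff m).1 hm, hm]

lemma newAmp_eq (hc : IsSingleBeamSplitter c s t R T) (hst : s ≠ t) (q : Fin N) (u : Fin N → ℂ)
    (τ : Fin N → ℝ) : newAmp c q u τ = bsAmp s t R T u τ := by
  funext m
  simp only [bsAmp, ← Matrix.mulVec_mulVec]
  by_cases hm : m = s ∨ m = t
  · rcases hm with rfl | rfl
    · simp [newAmp, hc.De_eq, hc.Sh_eq, (hc.inB_iff _).2 (Or.inl rfl), hc.choose_eq, hc.R_eq,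
        hc.T_eq, Bmat_mulVec_apply_left R T hst, DmatST, Matrix.mulVec_diagonal, hst.symm]
    · simp [newAmp, hc.De_eq, hc.Sh_eq, (hc.inB_iff _).2 (Or.inr rfl), hc.choose_eq, hc.R_eq,
        hc.T_eq, Bmat_mulVec_apply_right R T hst, DmatST, Matrix.mulVec_diagonal, hst.symm]
  · push Not at hm
    simp [newAmp, hc.De_eq, hc.Sh_eq, mt (hc.inB_iff m).1 (not_or.2 hm),
      Bmat_mulVec_apply_of_ne R T hm.1 hm.2, DmatST, Matrix.mulVec_diagonal, hm.1, hm.2]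

lemma step_of_not_mem (hc : IsSingleBeamSplitter c s t R T) (hst : s ≠ t) {l : Lam N}
    (hq : ¬(l.1 = s ∨ l.1 = t)) : step c l = Measure.dirac (bsState s t R T l.1 l) := by
  simp only [step, dif_neg (mt (hc.inB_iff l.1).1 hq), hc.newAmp_eq hst, hc.newTau_eq]
  rfl

lemma step_of_mem (hc : IsSingleBeamSplitter c s t R T) (hst : s ≠ t) {l : Lam N}
    (hq : l.1 = s ∨ l.1 = t)
    (hab : ‖bsAmp s t R T l.2.1 l.2.2 s‖ ^ 2 + ‖bsAmp s t R T l.2.1 l.2.2 t‖ ^ 2 ≠ 0) :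
    step c l =
      ENNReal.ofReal (‖bsAmp s t R T l.2.1 l.2.2 s‖ ^ 2
          / (‖bsAmp s t R T l.2.1 l.2.2 s‖ ^ 2 + ‖bsAmp s t R T l.2.1 l.2.2 t‖ ^ 2))
        • Measure.dirac (bsState s t R T s l)
      + ENNReal.ofReal (‖bsAmp s t R T l.2.1 l.2.2 t‖ ^ 2
          / (‖bsAmp s t R T l.2.1 l.2.2 s‖ ^ 2 + ‖bsAmp s t R T l.2.1 l.2.2 t‖ ^ 2))
        • Measure.dirac (bsState s t R T t l) := by
  simp only [step, dif_pos ((hc.inB_iff l.1).2 hq), hc.choose_eq, hc.newAmp_eq hst, hc.newTau_eq,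
    if_neg hab]
  rfl

lemma step_eq_bsKernel (hc : IsSingleBeamSplitter c s t R T) (hst : s ≠ t) (hR : 0 ≤ R)
    (hT : 0 ≤ T) (hRT : R + T = 1) {z : Fin N → ℂ} {i : Fin N} (hzi : z i ≠ 0) {l : Lam N}
    (hl : l ∈ lamSet z i) :
    step c l = bsKernel s t R T
      (ENNReal.ofReal (‖(Bmat s t R T *ᵥ z) s‖ ^ 2 / (‖z s‖ ^ 2 + ‖z t‖ ^ 2)))
      (ENNReal.ofReal (‖(Bmat s t R T *ᵥ z) t‖ ^ 2 / (‖z s‖ ^ 2 + ‖z t‖ ^ 2))) l := by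
  by_cases hi : i = s ∨ i = t
  · have hq : l.1 = s ∨ l.1 = t := hl.1 ▸ hi
    obtain ⟨α, hα, hamp⟩ := exists_bsAmp_eq_smul s t R T hst hl hi
    have hW : 0 < ‖z s‖ ^ 2 + ‖z t‖ ^ 2 := by
      rcases hi with rfl | rfl <;> positivity
    have hα2 : 0 < ‖α‖ ^ 2 := by positivity
    have hsum : ‖bsAmp s t R T l.2.1 l.2.2 s‖ ^ 2 + ‖bsAmp s t R T l.2.1 l.2.2 t‖ ^ 2
        = ‖α‖ ^ 2 * (‖z s‖ ^ 2 + ‖z t‖ ^ 2) := by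
      rw [hamp s (Or.inl rfl), hamp t (Or.inr rfl), norm_mul, norm_mul, mul_pow, mul_pow,
        ← mul_add, norm_sq_Bmat_mulVec_add R T hst hR hT hRT]
    rw [hc.step_of_mem hst hq (hsum ▸ (mul_pos hα2 hW).ne'), bsKernel, if_pos hq, hsum,
      hamp s (Or.inl rfl), hamp t (Or.inr rfl), norm_mul, norm_mul, mul_pow, mul_pow,
      mul_div_mul_left _ _ hα2.ne', mul_div_mul_left _ _ hα2.ne']
  · rw [hc.step_of_not_mem hst (hl.1 ▸ hi), bsKernel, if_neg (hl.1 ▸ hi)]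

end IsSingleBeamSplitter

/-- `memClass` with the weight `|z i|²` absorbed into the `i`-th component, so that components
with `z i = 0` are the zero measure instead of arbitrary ones. -/
def IsWeightedDecomposition {N : ℕ} (z : Fin N → ℂ) (μ : Fin N → Measure (Lam N)) : Prop :=
  ∀ i, μ i Set.univ = ENNReal.ofReal (‖z i‖ ^ 2) ∧ ∀ᵐ l ∂μ i, l ∈ lamSet z i

lemma memClass_iff {N : ℕ} {z : Fin N → ℂ} {p : Measure (Lam N)} :
    memClass z p ↔ ∃ μ : Fin N → Measure (Lam N), IsWeightedDecomposition z μ ∧ p = ∑ i, μ i := by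
  constructor
  · rintro ⟨f, hf, rfl⟩
    refine ⟨fun i => ENNReal.ofReal (‖z i‖ ^ 2) • f i, fun i => ?_, rfl⟩
    by_cases hzi : z i = 0
    · simp [hzi]
    · obtain ⟨hprob, hconc⟩ := hf i hzi
      refine ⟨by simp, Measure.ae_smul_measure ?_ _⟩
      exact ae_iff.2 ((prob_compl_eq_zero_iff (measurableSet_lamSet z i)).2 hconc)
  · rintro ⟨μ, hμ, rfl⟩
    refine ⟨fun i => (ENNReal.ofReal (‖z i‖ ^ 2))⁻¹ • μ i, fun i hzi => ?_, ?_⟩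
    · have hc : ENNReal.ofReal (‖z i‖ ^ 2) ≠ 0 := by simpa using hzi
      have hfull : μ i (lamSet z i) = μ i Set.univ :=
        measure_congr (ae_eq_univ.2 (ae_iff.1 (hμ i).2))
      refine ⟨⟨?_⟩, ?_⟩
      all_goals simp only [Measure.smul_apply, smul_eq_mul, hfull, (hμ i).1,
        ENNReal.inv_mul_cancel hc ENNReal.ofReal_ne_top]
    · refine Finset.sum_congr rfl fun i _ => ?_
      by_cases hzi : z i = 0
      · simp [hzi, Measure.measure_univ_eq_zero.1 (by simpa [hzi] using (hμ i).1)]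
      · have hc : ENNReal.ofReal (‖z i‖ ^ 2) ≠ 0 := by simpa using hzi
        rw [smul_smul, ENNReal.mul_inv_cancel hc ENNReal.ofReal_ne_top, one_smul]

section BeamSplitterOutput

variable {N : ℕ} (s t : Fin N) (R T : ℝ)

noncomputable def bsOutput (z : Fin N → ℂ) (μ : Fin N → Measure (Lam N)) (m : Fin N) :
    Measure (Lam N) :=
  if m = s ∨ m = t then
    ENNReal.ofReal (‖(Bmat s t R T *ᵥ z) m‖ ^ 2 / (‖z s‖ ^ 2 + ‖z t‖ ^ 2))
      • (μ s + μ t).map (bsState s t R T m)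
  else (μ m).map (bsState s t R T m)

lemma IsWeightedDecomposition.bsOutput (hst : s ≠ t) (hR : 0 ≤ R) (hT : 0 ≤ T)
    (hRT : R + T = 1) {z : Fin N → ℂ} {μ : Fin N → Measure (Lam N)}
    (hμ : IsWeightedDecomposition z μ) :
    IsWeightedDecomposition (Bmat s t R T *ᵥ z) (bsOutput s t R T z μ) := by
  intro m
  have hmap : ∀ ν : Measure (Lam N), ν.map (bsState s t R T m) Set.univ = ν Set.univ :=
    fun ν => by rw [Measure.map_apply (measurable_bsState s t R T m) .univ, Set.preimage_univ]
  have hae : ∀ {ν : Measure (Lam N)},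
      (∀ᵐ l ∂ν, bsState s t R T m l ∈ lamSet (Bmat s t R T *ᵥ z) m) →
      ∀ᵐ l ∂ν.map (bsState s t R T m), l ∈ lamSet (Bmat s t R T *ᵥ z) m := fun h =>
    (ae_map_iff (measurable_bsState s t R T m).aemeasurable (measurableSet_lamSet _ m)).2 h
  by_cases hm : m = s ∨ m = t
  · simp only [SPI.bsOutput, if_pos hm]
    have hW : ‖z s‖ ^ 2 + ‖z t‖ ^ 2 = 0 → ‖(Bmat s t R T *ᵥ z) m‖ ^ 2 = 0 := by
      rw [← norm_sq_Bmat_mulVec_add R T hst hR hT hRT z]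
      intro h
      have h0 := (add_eq_zero_iff_of_nonneg (sq_nonneg _) (sq_nonneg _)).1 h
      rcases hm with rfl | rfl
      exacts [h0.1, h0.2]
    refine ⟨?_, Measure.ae_smul_measure (hae ?_) _⟩
    · rw [Measure.smul_apply, hmap, Measure.add_apply, (hμ s).1, (hμ t).1, smul_eq_mul,
        ← ENNReal.ofReal_add (by positivity) (by positivity), ← ENNReal.ofReal_mul (by positivity),
        div_mul_cancel_of_imp hW]
    · rw [ae_add_measure_iff]
      exact ⟨(hμ s).2.mono fun l hl =>
          bsState_mem_lamSet s t R T hst hl (bsStrength_eq_tmax_of_mem s t hl.2.1 (.inl rfl) hm),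
        (hμ t).2.mono fun l hl =>
          bsState_mem_lamSet s t R T hst hl (bsStrength_eq_tmax_of_mem s t hl.2.1 (.inr rfl) hm)⟩
  · push Not at hm
    simp only [SPI.bsOutput, if_neg (not_or.2 hm), hmap, (hμ m).1,
      Bmat_mulVec_apply_of_ne R T hm.1 hm.2, true_and]
    exact hae ((hμ m).2.mono fun l hl =>
      bsState_mem_lamSet s t R T hst hl (bsStrength_eq_tmax_of_ne s t hl.2.1 hm.1 hm.2))

end BeamSplitterOutput

lemma IsSingleBeamSplitter.out_sum_eq_sum_bsOutput {N : ℕ} {c : Config N} {s t : Fin N}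
    {R T : ℝ} (hc : IsSingleBeamSplitter c s t R T) (hst : s ≠ t) (hR : 0 ≤ R) (hT : 0 ≤ T)
    (hRT : R + T = 1) {z : Fin N → ℂ} {μ : Fin N → Measure (Lam N)}
    (hμ : IsWeightedDecomposition z μ) :
    out c (∑ i, μ i) = ∑ m, bsOutput s t R T z μ m := by
  set G := bsKernel s t R T
    (ENNReal.ofReal (‖(Bmat s t R T *ᵥ z) s‖ ^ 2 / (‖z s‖ ^ 2 + ‖z t‖ ^ 2)))
    (ENNReal.ofReal (‖(Bmat s t R T *ᵥ z) t‖ ^ 2 / (‖z s‖ ^ 2 + ‖z t‖ ^ 2)))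
  have hG : ∀ᵐ l ∂(∑ i, μ i), step c l = G l := by
    refine ae_finsetSum_measure_iff.2 fun i _ => ?_
    by_cases hzi : z i = 0
    · simp [Measure.measure_univ_eq_zero.1 (by simpa [hzi] using (hμ i).1)]
    · exact (hμ i).2.mono fun l hl => hc.step_eq_bsKernel hst hR hT hRT hzi hl
  have hpair : ∀ i, i = s ∨ i = t → ∀ᵐ l ∂μ i, l.1 = s ∨ l.1 = t :=
    fun i hi => (hμ i).2.mono fun l hl => hl.1 ▸ hi
  rw [out, Measure.bind_congr_right hG, Measure.finsetSum_bind _ _ (measurable_bsKernel ..),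
    ← Finset.sum_sdiff (Finset.subset_univ {s, t}),
    ← Finset.sum_sdiff (Finset.subset_univ {s, t}) (f := bsOutput s t R T z μ)]
  congr 1
  · refine Finset.sum_congr rfl fun m hm => ?_
    simp only [Finset.mem_sdiff, Finset.mem_insert, Finset.mem_singleton, Finset.mem_univ,
      true_and] at hm
    push Not at hm
    rw [bind_bsKernel_of_ae_fst_eq s t R T _ _ hm.1 hm.2 ((hμ m).2.mono fun l hl => hl.1),
      bsOutput, if_neg (not_or.2 hm)]
  · rw [← Measure.finsetSum_bind _ _ (measurable_bsKernel ..), Finset.sum_pair hst,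
      Finset.sum_pair hst, bind_bsKernel_of_ae_fst_mem s t R T _ _
        (ae_add_measure_iff.2 ⟨hpair s (.inl rfl), hpair t (.inr rfl)⟩)]
    simp [bsOutput]

theorem thm1_beam_splitter_general {N : ℕ} (c : Config N) (s t : Fin N) (hstne : s ≠ t)
    (R T : ℝ) (hR : 0 ≤ R) (hT : 0 ≤ T) (hRT : R + T = 1)
    (hBs : c.Bs = {(s, t)}) (hRc : c.R (s, t) = R) (hTc : c.T (s, t) = T)
    (hDe : c.De = ∅) (hSh : c.Sh = ∅)
    (z : Fin N → ℂ)
    (p : Measure (Lam N)) (hp : memClass z p) :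
    memClass ((Bmat s t R T).mulVec z) (out c p) := by
  have hc : IsSingleBeamSplitter c s t R T := ⟨hBs, hRc, hTc, hDe, hSh⟩
  obtain ⟨μ, hμ, rfl⟩ := memClass_iff.1 hp
  exact memClass_iff.2 ⟨bsOutput s t R T z μ, hμ.bsOutput s t R T hstne hR hT hRT,
    hc.out_sum_eq_sum_bsOutput hstne hR hT hRT hμ⟩

/-- Theorem 1, beam-splitter bullet. A single beam splitter `B_st(R,T)`
(all other paths free) maps `[z]` into `[B_st(R,T) z]`. -/
theorem thm1_beam_splitter {N : ℕ} (c : Config N) (s t : Fin N) (hstne : s ≠ t)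
    (R T : ℝ) (hR : 0 ≤ R) (hT : 0 ≤ T) (hRT : R + T = 1)
    (hBs : c.Bs = {(s, t)}) (hRc : c.R (s, t) = R) (hTc : c.T (s, t) = T)
    (hDe : c.De = ∅) (hSh : c.Sh = ∅) (hFr : c.Fr = Finset.univ \ {s, t})
    (z : Fin N → ℂ) (hz : ∑ i, ‖z i‖ ^ 2 = 1)
    (p : Measure (Lam N)) (hp : memClass z p) :
    memClass ((Bmat s t R T).mulVec z) (out c p) :=
  thm1_beam_splitter_general c s t hstne R T hR hT hRT hBs hRc hTc hDe hSh z p hp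

end SPI
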